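/- arXiv:1612.01833 — 3 statements merged into one kernel-verified Lean document; each statement's English description precedes it below -/
import Mathlib

section
/- For every n ≥ 1 and constants c, l > 0 there exists a constant C = C(n,c,l) > 0 such that for all x, y ∈ ℝⁿ, t > 0, and a ∈ ℝⁿ with |a - (x+y)/2| ≤ l√t, one has ∫_{B(a,c√t)} k(t,x,z) k(t,z,y) dz ≥ C · k(2t,x,y), where k(t,x,y) = (4πt)^{-n/2} exp(-|x-y|²/(4t)). -/
/-!
By Apollonius's theorem, `k(t,x,z) k(t,z,y) = (4πt)^{-n} e^{-|x-y|²/8t} e^{-|m-z|²/2t}` where `m` is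
the midpoint of `x` and `y`. On `B(a, c√t)` we have `|m - z| ≤ (c + l)√t`, so the integrand is at least
`(4πt)^{-n} e^{-|x-y|²/8t} e^{-(c+l)²/2}`. The ball has volume `(c√t)^n |B(0,1)|`, and this factor
of `t^{n/2}` turns `(4πt)^{-n}` into a constant multiple of `(8πt)^{-n/2}`, the prefactor of `k(2t,x,y)`.
-/

open Real MeasureTheory Metric

noncomputable def heatKernel {E : Type*} [NormedAddCommGroup E] (d : ℕ) (t : ℝ) (u v : E) : ℝ :=
  (4 * π * t) ^ (-(d : ℝ) / 2) * exp (-‖u - v‖ ^ 2 / (4 * t))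

lemma rpow_neg_mul_mul_sqrt_pow (d : ℕ) {t : ℝ} (ht : 0 < t) (c : ℝ) :
    (4 * π * t) ^ (-(d : ℝ)) * (c * √t) ^ d =
      (2 * π) ^ (-(d : ℝ) / 2) * c ^ d * (8 * π * t) ^ (-(d : ℝ) / 2) := by
  have hsqrt : √t ^ d = t ^ ((d : ℝ) / 2) := by
    rw [sqrt_eq_rpow, ← rpow_natCast, ← rpow_mul ht.le]; ring_nf
  have ht' : t ^ (-(d : ℝ)) * t ^ ((d : ℝ) / 2) = t ^ (-(d : ℝ) / 2) := by
    rw [← rpow_add ht]; ring_nf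
  have hπ : (4 * π) ^ (-(d : ℝ)) = (2 * π) ^ (-(d : ℝ) / 2) * (8 * π) ^ (-(d : ℝ) / 2) := by
    rw [← mul_rpow (by positivity) (by positivity), show -(d : ℝ) = 2 * (-(d : ℝ) / 2) by ring,
      rpow_mul (by positivity)]
    norm_num; ring_nf
  rw [mul_rpow (by positivity) ht.le, mul_rpow (by positivity) ht.le, mul_pow, hsqrt, hπ, ← ht']
  ring

section

variable {E : Type*} [NormedAddCommGroup E]

lemma heatKernel_two_mul (d : ℕ) (t : ℝ) (x y : E) :
    heatKernel d (2 * t) x y = (8 * π * t) ^ (-(d : ℝ) / 2) * exp (-‖x - y‖ ^ 2 / (8 * t)) := by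
  unfold heatKernel; ring_nf

lemma continuous_heatKernel_mul (d : ℕ) (t : ℝ) (x y : E) :
    Continuous fun z => heatKernel d t x z * heatKernel d t z y := by
  unfold heatKernel; fun_prop

variable [InnerProductSpace ℝ E]

lemma heatKernel_mul_heatKernel (d : ℕ) {t : ℝ} (ht : 0 < t) (x y z : E) :
    heatKernel d t x z * heatKernel d t z y =
      (4 * π * t) ^ (-(d : ℝ)) * exp (-‖x - y‖ ^ 2 / (8 * t)) *
        exp (-‖midpoint ℝ x y - z‖ ^ 2 / (2 * t)) := by
  have hapollonius :=
    EuclideanGeometry.dist_sq_add_dist_sq_eq_two_mul_dist_midpoint_sq_add_half_dist_sq z x y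
  simp only [dist_eq_norm] at hapollonius
  have hexp : exp (-‖x - z‖ ^ 2 / (4 * t)) * exp (-‖z - y‖ ^ 2 / (4 * t)) =
      exp (-‖x - y‖ ^ 2 / (8 * t)) * exp (-‖midpoint ℝ x y - z‖ ^ 2 / (2 * t)) := by
    rw [← exp_add, ← exp_add, norm_sub_rev x z, norm_sub_rev (midpoint ℝ x y) z]
    congr 1
    field_simp
    linear_combination (-16) * hapollonius
  have hrpow : (4 * π * t) ^ (-(d : ℝ)) =
      (4 * π * t) ^ (-(d : ℝ) / 2) * (4 * π * t) ^ (-(d : ℝ) / 2) := by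
    rw [← rpow_add (by positivity)]; ring_nf
  unfold heatKernel
  rw [hrpow]
  linear_combination (4 * π * t) ^ (-(d : ℝ) / 2) * (4 * π * t) ^ (-(d : ℝ) / 2) * hexp

lemma le_heatKernel_mul_of_norm_midpoint_sub_le (d : ℕ) {t R : ℝ} (ht : 0 < t) {x y z : E}
    (hz : ‖midpoint ℝ x y - z‖ ≤ R * √t) :
    (4 * π * t) ^ (-(d : ℝ)) * exp (-‖x - y‖ ^ 2 / (8 * t)) * exp (-R ^ 2 / 2) ≤
      heatKernel d t x z * heatKernel d t z y := by
  have hsq : ‖midpoint ℝ x y - z‖ ^ 2 ≤ R ^ 2 * t := by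
    calc ‖midpoint ℝ x y - z‖ ^ 2 ≤ (R * √t) ^ 2 := by gcongr
      _ = R ^ 2 * t := by rw [mul_pow, sq_sqrt ht.le]
  rw [heatKernel_mul_heatKernel d ht]
  gcongr _ * exp ?_
  rw [neg_div, neg_div, neg_le_neg_iff, div_le_div_iff₀ (by positivity) two_pos]
  nlinarith

variable [FiniteDimensional ℝ E] [MeasurableSpace E] [BorelSpace E]

theorem mul_heatKernel_two_mul_le_setIntegral_ball (μ : Measure E) [μ.IsAddHaarMeasure]
    {c l t : ℝ} (hc : 0 < c) (ht : 0 < t) {x y a : E} (ha : ‖a - midpoint ℝ x y‖ ≤ l * √t) :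
    (2 * π) ^ (-(Module.finrank ℝ E : ℝ) / 2) * c ^ Module.finrank ℝ E * μ.real (ball 0 1) *
        exp (-(c + l) ^ 2 / 2) * heatKernel (Module.finrank ℝ E) (2 * t) x y ≤
      ∫ z in ball a (c * √t), heatKernel (Module.finrank ℝ E) t x z *
        heatKernel (Module.finrank ℝ E) t z y ∂μ := by
  set d := Module.finrank ℝ E
  have hbound : ∀ z ∈ ball a (c * √t),
      (4 * π * t) ^ (-(d : ℝ)) * exp (-‖x - y‖ ^ 2 / (8 * t)) * exp (-(c + l) ^ 2 / 2) ≤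
        heatKernel d t x z * heatKernel d t z y := by
    intro z hz
    refine le_heatKernel_mul_of_norm_midpoint_sub_le d ht ?_
    calc ‖midpoint ℝ x y - z‖ ≤ ‖midpoint ℝ x y - a‖ + ‖a - z‖ :=
          norm_sub_le_norm_sub_add_norm_sub _ _ _
      _ ≤ l * √t + c * √t := by
          gcongr
          · rwa [norm_sub_rev]
          · simpa only [dist_eq_norm] using (mem_ball'.mp hz).le
      _ = (c + l) * √t := by ring
  have hvol : μ.real (ball a (c * √t)) = (c * √t) ^ d * μ.real (ball 0 1) := by
    rw [measureReal_def, Measure.addHaar_ball_of_pos μ a (by positivity), ENNReal.toReal_mul,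
      ENNReal.toReal_ofReal (by positivity), measureReal_def]
  calc _ = (4 * π * t) ^ (-(d : ℝ)) * exp (-‖x - y‖ ^ 2 / (8 * t)) * exp (-(c + l) ^ 2 / 2) *
        μ.real (ball a (c * √t)) := by
        rw [hvol, heatKernel_two_mul]
        linear_combination -(exp (-‖x - y‖ ^ 2 / (8 * t)) * exp (-(c + l) ^ 2 / 2) *
          μ.real (ball 0 1)) * rpow_neg_mul_mul_sqrt_pow d ht c
    _ ≤ _ := setIntegral_ge_of_const_le_real measurableSet_ball measure_ball_lt_top.ne hbound
        (((continuous_heatKernel_mul d t x y).continuousOn.integrableOn_compact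
          (isCompact_closedBall a _)).mono_set ball_subset_closedBall)

end

theorem gaussian_midpoint_ball_integral_lower_general (n : ℕ) (c l : ℝ)
    (hc : 0 < c)
    (k : ℝ → EuclideanSpace ℝ (Fin n) → EuclideanSpace ℝ (Fin n) → ℝ)
    (hk : ∀ s u v, k s u v =
      (4 * π * s) ^ (-(n : ℝ) / 2) * exp (-‖u - v‖ ^ 2 / (4 * s))) :
    ∃ C : ℝ, 0 < C ∧
      ∀ (x y a : EuclideanSpace ℝ (Fin n)) (t : ℝ), 0 < t →
        ‖a - (1 / 2 : ℝ) • (x + y)‖ ≤ l * Real.sqrt t →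
        C * k (2 * t) x y ≤
          ∫ z in Metric.ball a (c * Real.sqrt t), k t x z * k t z y := by
  obtain rfl : k = heatKernel n := by
    funext s u v; exact hk s u v
  have hball : 0 < volume.real (ball (0 : EuclideanSpace ℝ (Fin n)) 1) :=
    ENNReal.toReal_pos (measure_ball_pos volume 0 one_pos).ne' measure_ball_lt_top.ne
  refine ⟨(2 * π) ^ (-(n : ℝ) / 2) * c ^ n * volume.real (ball (0 : EuclideanSpace ℝ (Fin n)) 1) *
    exp (-(c + l) ^ 2 / 2), by positivity, fun x y a t ht ha => ?_⟩
  rw [one_div, ← invOf_eq_inv, ← midpoint_eq_smul_add] at ha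
  simpa only [finrank_euclideanSpace_fin] using
    mul_heatKernel_two_mul_le_setIntegral_ball volume hc ht ha

theorem gaussian_midpoint_ball_integral_lower (n : ℕ) (hn : 1 ≤ n) (c l : ℝ)
    (hc : 0 < c) (hl : 0 < l)
    (k : ℝ → EuclideanSpace ℝ (Fin n) → EuclideanSpace ℝ (Fin n) → ℝ)
    (hk : ∀ s u v, k s u v =
      (4 * π * s) ^ (-(n : ℝ) / 2) * exp (-‖u - v‖ ^ 2 / (4 * s))) :
    ∃ C : ℝ, 0 < C ∧
      ∀ (x y a : EuclideanSpace ℝ (Fin n)) (t : ℝ), 0 < t →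
        ‖a - (1 / 2 : ℝ) • (x + y)‖ ≤ l * Real.sqrt t →
        C * k (2 * t) x y ≤
          ∫ z in Metric.ball a (c * Real.sqrt t), k t x z * k t z y :=
  gaussian_midpoint_ball_integral_lower_general n c l hc k hk
end

section
/- Let k(t,x,y) = (4πt)^{-n/2}exp(-|x-y|²/(4t)) and let x, y ∈ B(0,1)\{0} with angle θ between them, x̄ = ((2-|x|)/|x|)x, ȳ = ((2-|y|)/|y|)y. Then k(t,x,ȳ) = exp(-(1-|y|)(1-|x|cos θ)/t)·k(t,x,y) and k(t,x̄,ȳ) = exp(-(1-cos θ)((1-|x|)+(1-|y|))/t)·k(t,x,y). -/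
/-!
Reflecting `y` through the tangent hyperplane of the unit sphere at `y / ‖y‖` keeps its direction
and replaces `‖y‖` by `2 - ‖y‖`. Expanding `‖x - ȳ‖²` and `‖x̄ - ȳ‖²` by the law of cosines,
they exceed `‖x - y‖²` by `4 (1 - ‖y‖)(1 - ‖x‖ cos θ)` and `4 (1 - cos θ)((1 - ‖x‖) + (1 - ‖y‖))`,
and a shift of the squared distance by `4c` multiplies the Gaussian kernel by `exp (-c / t)`.
-/

open Real InnerProductGeometry

section TangentReflection

variable {E : Type*} [NormedAddCommGroup E] [InnerProductSpace ℝ E]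

/-- The reflection `x̄` of `x` through the tangent hyperplane of the unit sphere at `x / ‖x‖`. -/
noncomputable def tangentReflection (x : E) : E := ((2 - ‖x‖) / ‖x‖) • x

theorem norm_tangentReflection_sq {x : E} (hx : x ≠ 0) :
    ‖tangentReflection x‖ ^ 2 = (2 - ‖x‖) ^ 2 := by
  have hx' : ‖x‖ ≠ 0 := norm_ne_zero_iff.mpr hx
  rw [tangentReflection, norm_smul, mul_pow, norm_eq_abs, sq_abs]
  field_simp

theorem norm_sub_tangentReflection_sq (x : E) {y : E} (hy : y ≠ 0) :
    ‖x - tangentReflection y‖ ^ 2 =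
      ‖x - y‖ ^ 2 + 4 * ((1 - ‖y‖) * (1 - ‖x‖ * cos (angle x y))) := by
  have hy' : ‖y‖ ≠ 0 := norm_ne_zero_iff.mpr hy
  rw [norm_sub_sq_real, norm_sub_sq_real, norm_tangentReflection_sq hy, tangentReflection,
    real_inner_smul_right, ← cos_angle_mul_norm_mul_norm]
  field_simp
  ring

theorem norm_tangentReflection_sub_tangentReflection_sq {x y : E} (hx : x ≠ 0) (hy : y ≠ 0) :
    ‖tangentReflection x - tangentReflection y‖ ^ 2 =
      ‖x - y‖ ^ 2 + 4 * ((1 - cos (angle x y)) * ((1 - ‖x‖) + (1 - ‖y‖))) := by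
  have hx' : ‖x‖ ≠ 0 := norm_ne_zero_iff.mpr hx
  have hy' : ‖y‖ ≠ 0 := norm_ne_zero_iff.mpr hy
  rw [norm_sub_sq_real, norm_sub_sq_real, norm_tangentReflection_sq hx,
    norm_tangentReflection_sq hy, tangentReflection, tangentReflection, real_inner_smul_left,
    real_inner_smul_right, ← cos_angle_mul_norm_mul_norm]
  field_simp
  ring

end TangentReflection

section GaussianKernel

variable {E : Type*} [SeminormedAddCommGroup E]

noncomputable def gaussianKernel (n : ℕ) (t : ℝ) (u v : E) : ℝ :=
  (4 * π * t) ^ (-(n : ℝ) / 2) * exp (-‖u - v‖ ^ 2 / (4 * t))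

theorem gaussianKernel_eq_exp_mul_of_norm_sub_sq_eq (n : ℕ) (t : ℝ) {u v u' v' : E} {c : ℝ}
    (h : ‖u' - v'‖ ^ 2 = ‖u - v‖ ^ 2 + 4 * c) :
    gaussianKernel n t u' v' = exp (-c / t) * gaussianKernel n t u v := by
  have hc : 4 * c / (4 * t) = c / t := mul_div_mul_left c t four_ne_zero
  have hexponent : -‖u' - v'‖ ^ 2 / (4 * t) = -c / t + -‖u - v‖ ^ 2 / (4 * t) := by
    rw [h, neg_div, neg_div, ← hc]
    ring
  rw [gaussianKernel, gaussianKernel, hexponent, exp_add]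
  ring

end GaussianKernel

theorem gaussian_kernel_reflected_points_general (n : ℕ)
    (x y : EuclideanSpace ℝ (Fin n)) (hx : x ≠ 0) (hy : y ≠ 0)
    (t : ℝ)
    (k : ℝ → EuclideanSpace ℝ (Fin n) → EuclideanSpace ℝ (Fin n) → ℝ)
    (hk : ∀ s u v, k s u v =
      (4 * π * s) ^ (-(n : ℝ) / 2) * Real.exp (-‖u - v‖ ^ 2 / (4 * s))) :
    k t x (((2 - ‖y‖) / ‖y‖) • y) =
        Real.exp (-((1 - ‖y‖) * (1 - ‖x‖ * Real.cos (angle x y))) / t) * k t x y ∧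
      k t (((2 - ‖x‖) / ‖x‖) • x) (((2 - ‖y‖) / ‖y‖) • y) =
        Real.exp (-((1 - Real.cos (angle x y)) * ((1 - ‖x‖) + (1 - ‖y‖))) / t) *
          k t x y := by
  obtain rfl : k = gaussianKernel n := by
    funext s u v
    exact hk s u v
  exact ⟨gaussianKernel_eq_exp_mul_of_norm_sub_sq_eq n t (norm_sub_tangentReflection_sq x hy),
    gaussianKernel_eq_exp_mul_of_norm_sub_sq_eq n t
      (norm_tangentReflection_sub_tangentReflection_sq hx hy)⟩

theorem gaussian_kernel_reflected_points (n : ℕ)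
    (x y : EuclideanSpace ℝ (Fin n)) (hx : x ≠ 0) (hy : y ≠ 0)
    (hx1 : ‖x‖ < 1) (hy1 : ‖y‖ < 1) (t : ℝ) (ht : 0 < t)
    (k : ℝ → EuclideanSpace ℝ (Fin n) → EuclideanSpace ℝ (Fin n) → ℝ)
    (hk : ∀ s u v, k s u v =
      (4 * π * s) ^ (-(n : ℝ) / 2) * Real.exp (-‖u - v‖ ^ 2 / (4 * s))) :
    k t x (((2 - ‖y‖) / ‖y‖) • y) =
        Real.exp (-((1 - ‖y‖) * (1 - ‖x‖ * Real.cos (angle x y))) / t) * k t x y ∧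
      k t (((2 - ‖x‖) / ‖x‖) • x) (((2 - ‖y‖) / ‖y‖) • y) =
        Real.exp (-((1 - Real.cos (angle x y)) * ((1 - ‖x‖) + (1 - ‖y‖))) / t) *
          k t x y :=
  gaussian_kernel_reflected_points_general n x y hx hy t k hk
end

section
/- Let x, y ∈ B(0,1) ⊂ ℝⁿ be nonzero with angle θ = ∠(x,y) < π/4, and suppose |x|, |y| ≥ 15/16 and cos θ ≤ |x| ≤ |y|. Then |x|sin θ ≤ |x-y| and |x-y| ≤ |y|tan θ, and consequently there is an absolute constant c > 1 with c⁻¹|x-y|² ≤ 1 - cos θ ≤ c|x-y|² and c⁻¹|x-y|² ≤ 1 - |x|cos θ ≤ c|x-y|². -/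
/-!
Write `a = ‖x‖`, `b = ‖y‖`, `θ = angle x y` and `d = ‖x - y‖`. The law of cosines splits
`d² = (b - a cos θ)² + (a sin θ)²`, which gives `a sin θ ≤ d`, and the factorisation
`b² sin² θ - d² cos² θ = (b - a cos θ) (b sin² θ + cos θ (a - b cos θ))` gives `d cos θ ≤ b sin θ`
as soon as `0 ≤ cos θ ≤ a ≤ b ≤ 1`. Since `1 - cos θ ≤ sin² θ ≤ 2 (1 - cos θ)` for `0 ≤ cos θ`,
the two bounds make `1 - cos θ` comparable to `d²` once `a` and `cos θ` are bounded below,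
and `1 - cos θ ≤ 1 - a cos θ ≤ 2 (1 - cos θ)` because `1 - a ≤ 1 - cos θ`.
-/

open Real InnerProductGeometry

namespace InnerProductGeometry

variable {V : Type*} [NormedAddCommGroup V] [InnerProductSpace ℝ V]

lemma norm_sub_sq_eq_sq_add_sq (x y : V) :
    ‖x - y‖ ^ 2 = (‖y‖ - ‖x‖ * cos (angle x y)) ^ 2 + (‖x‖ * sin (angle x y)) ^ 2 := by
  have hcos := norm_sub_sq_eq_norm_sq_add_norm_sq_sub_two_mul_norm_mul_norm_mul_cos_angle x y
  have hsin := sin_sq_add_cos_sq (angle x y)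
  linear_combination hcos - ‖x‖ ^ 2 * hsin

lemma sq_norm_mul_sin_angle_le_sq_norm_sub (x y : V) :
    (‖x‖ * sin (angle x y)) ^ 2 ≤ ‖x - y‖ ^ 2 := by
  rw [norm_sub_sq_eq_sq_add_sq]
  exact le_add_of_nonneg_left (sq_nonneg _)

lemma norm_mul_sin_angle_le_norm_sub (x y : V) : ‖x‖ * sin (angle x y) ≤ ‖x - y‖ :=
  (abs_le_of_sq_le_sq' (sq_norm_mul_sin_angle_le_sq_norm_sub x y) (norm_nonneg _)).2

lemma sq_norm_mul_one_sub_cos_angle_le (x y : V) (hc : 0 ≤ cos (angle x y)) :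
    ‖x‖ ^ 2 * (1 - cos (angle x y)) ≤ ‖x - y‖ ^ 2 :=
  calc ‖x‖ ^ 2 * (1 - cos (angle x y))
      ≤ ‖x‖ ^ 2 * sin (angle x y) ^ 2 := by
        gcongr
        nlinarith [sin_sq_add_cos_sq (angle x y), cos_le_one (angle x y)]
    _ = (‖x‖ * sin (angle x y)) ^ 2 := by ring
    _ ≤ ‖x - y‖ ^ 2 := sq_norm_mul_sin_angle_le_sq_norm_sub x y

lemma norm_sub_mul_cos_angle_le (x y : V) (hc : 0 ≤ cos (angle x y))
    (hcx : cos (angle x y) ≤ ‖x‖) (hxy : ‖x‖ ≤ ‖y‖) (hy : ‖y‖ ≤ 1) :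
    ‖x - y‖ * cos (angle x y) ≤ ‖y‖ * sin (angle x y) := by
  set a := ‖x‖
  set b := ‖y‖
  set c := cos (angle x y)
  set s := sin (angle x y)
  have hsin : s ^ 2 + c ^ 2 = 1 := sin_sq_add_cos_sq _
  have hfactor :
      (b * s) ^ 2 - (‖x - y‖ * c) ^ 2 = (b - a * c) * (b * s ^ 2 + c * (a - b * c)) := by
    linear_combination (-c ^ 2) * norm_sub_sq_eq_sq_add_sq x y + a * c * (b - a * c) * hsin
  have hb : 0 ≤ b - a * c := by nlinarith [cos_le_one (angle x y)]
  have hbc : 0 ≤ a - b * c := by nlinarith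
  refine abs_le_of_sq_le_sq' ?_ (mul_nonneg (norm_nonneg _) (sin_angle_nonneg x y)) |>.2
  nlinarith [mul_nonneg hb
    (add_nonneg (mul_nonneg (norm_nonneg y) (sq_nonneg s)) (mul_nonneg hc hbc))]

lemma norm_sub_le_mul_tan_angle (x y : V) (hc : 0 < cos (angle x y))
    (hcx : cos (angle x y) ≤ ‖x‖) (hxy : ‖x‖ ≤ ‖y‖) (hy : ‖y‖ ≤ 1) :
    ‖x - y‖ ≤ ‖y‖ * tan (angle x y) := by
  rw [tan_eq_sin_div_cos, ← mul_div_assoc, le_div_iff₀ hc]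
  exact norm_sub_mul_cos_angle_le x y hc.le hcx hxy hy

lemma sq_cos_angle_mul_sq_norm_sub_le (x y : V) (hc : 0 ≤ cos (angle x y))
    (hcx : cos (angle x y) ≤ ‖x‖) (hxy : ‖x‖ ≤ ‖y‖) (hy : ‖y‖ ≤ 1) :
    cos (angle x y) ^ 2 * ‖x - y‖ ^ 2 ≤ 2 * (1 - cos (angle x y)) := by
  have hsin := sin_sq_add_cos_sq (angle x y)
  have hle := norm_sub_mul_cos_angle_le x y hc hcx hxy hy
  have hys : ‖y‖ * sin (angle x y) ≤ sin (angle x y) :=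
    mul_le_of_le_one_left (sin_angle_nonneg x y) hy
  have hsq := pow_le_pow_left₀ (mul_nonneg (norm_nonneg _) hc) (hle.trans hys) 2
  nlinarith [cos_le_one (angle x y)]

lemma half_lt_cos_angle (x y : V) (h : angle x y < π / 4) : 1 / 2 < cos (angle x y) := by
  rw [← cos_pi_div_three]
  exact cos_lt_cos_of_nonneg_of_le_pi (angle_nonneg x y) (by linarith [pi_pos])
    (by linarith [pi_pos])

end InnerProductGeometry

lemma one_sub_le_one_sub_mul_le_two_mul {a c : ℝ} (hc : 0 ≤ c) (hca : c ≤ a) (ha : a ≤ 1) :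
    1 - c ≤ 1 - a * c ∧ 1 - a * c ≤ 2 * (1 - c) :=
  ⟨by nlinarith, by nlinarith⟩

theorem angle_distance_comparability (n : ℕ) :
    ∃ c : ℝ, 1 < c ∧
      ∀ (x y : EuclideanSpace ℝ (Fin n)), x ≠ 0 → y ≠ 0 →
        ‖x‖ < 1 → ‖y‖ < 1 → angle x y < π / 4 →
        15 / 16 ≤ ‖x‖ → 15 / 16 ≤ ‖y‖ →
        Real.cos (angle x y) ≤ ‖x‖ → ‖x‖ ≤ ‖y‖ →
        ‖x‖ * Real.sin (angle x y) ≤ ‖x - y‖ ∧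
          ‖x - y‖ ≤ ‖y‖ * Real.tan (angle x y) ∧
          c⁻¹ * ‖x - y‖ ^ 2 ≤ 1 - Real.cos (angle x y) ∧
          1 - Real.cos (angle x y) ≤ c * ‖x - y‖ ^ 2 ∧
          c⁻¹ * ‖x - y‖ ^ 2 ≤ 1 - ‖x‖ * Real.cos (angle x y) ∧
          1 - ‖x‖ * Real.cos (angle x y) ≤ c * ‖x - y‖ ^ 2 := by
  refine ⟨8, by norm_num, fun x y _ _ _ hy hθ hx _ hcx hxy => ?_⟩
  have hc := half_lt_cos_angle x y hθ
  have hc0 : 0 < cos (angle x y) := by linarith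
  have hy1 : ‖y‖ ≤ 1 := hy.le
  have hcos_le : ‖x - y‖ ^ 2 ≤ 8 * (1 - cos (angle x y)) := by
    have hc2 : 1 / 4 ≤ cos (angle x y) ^ 2 := by nlinarith
    linarith [sq_cos_angle_mul_sq_norm_sub_le x y hc0.le hcx hxy hy1,
      mul_le_mul_of_nonneg_right hc2 (sq_nonneg ‖x - y‖)]
  have hcos_ge : 1 - cos (angle x y) ≤ 2 * ‖x - y‖ ^ 2 := by
    have hx2 : 1 / 2 ≤ ‖x‖ ^ 2 := by nlinarith
    linarith [sq_norm_mul_one_sub_cos_angle_le x y hc0.le,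
      mul_le_mul_of_nonneg_right hx2 (sub_nonneg.2 (cos_le_one (angle x y)))]
  obtain ⟨hac_ge, hac_le⟩ := one_sub_le_one_sub_mul_le_two_mul hc0.le hcx (hxy.trans hy1)
  refine ⟨norm_mul_sin_angle_le_norm_sub x y, norm_sub_le_mul_tan_angle x y hc0 hcx hxy hy1,
    ?_, ?_, ?_, ?_⟩ <;> linarith
end
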